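/- The number of tuples (v_1,...,v_{2ν}) ∈ V^{2ν} in which every value appearing in the tuple appears an even number of times is at most C(2ν,ν) · ν! · |V|^ν = (2ν)!/ν! · |V|^ν, for any finite set V and integer ν ≥ 1. -/

import Mathlib

/-!
Write `N n` for the number of `n`-tuples over `V` in which every value occurs an even number of
times. In such a tuple of length `n + 2` the first entry occurs again at some later position;
deleting these two positions leaves such a tuple of length `n`, and the original is recovered from
the shorter one, the repeated value and the position of its second occurrence. Hence
`N (n + 2) ≤ |V| (n + 1) N n`, while `C(2ν, ν) ν!` grows by the larger factor `2 (2ν + 1)` from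
`ν` to `ν + 1`.
-/

open Finset Nat

theorem Fin.card_filter_univ_succAbove {n : ℕ} (P : Fin (n + 1) → Prop) [DecidablePred P]
    (p : Fin (n + 1)) : #{i | P i} = (if P p then 1 else 0) + #{i | P (p.succAbove i)} := by
  simp only [card_filter]
  exact Fin.sum_univ_succAbove _ p

theorem choose_two_mul_mul_factorial_succ (ν : ℕ) :
    (2 * (ν + 1)).choose (ν + 1) * (ν + 1)! = 2 * (2 * ν + 1) * ((2 * ν).choose ν * ν !) := by
  rw [← centralBinom_eq_two_mul_choose, ← centralBinom_eq_two_mul_choose, factorial_succ,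
    ← mul_assoc, mul_comm _ (ν + 1), succ_mul_centralBinom_succ]
  ring

section EvenFiberTuples

variable {α : Type*} [DecidableEq α]

def evenFiberTuples (V : Finset α) (n : ℕ) : Finset (Fin n → α) :=
  (Fintype.piFinset fun _ : Fin n => V).filter fun f => ∀ x ∈ V, Even #{i | f i = x}

theorem evenFiberTuples_add_two_subset (V : Finset α) (n : ℕ) :
    evenFiberTuples V (n + 2) ⊆ ((V ×ˢ univ) ×ˢ evenFiberTuples V n).image
      fun q => Fin.cons q.1.1 (Fin.insertNth q.1.2 q.1.1 q.2) := by
  intro f hf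
  simp only [evenFiberTuples, mem_filter, Fintype.mem_piFinset] at hf
  obtain ⟨hfV, hfEven⟩ := hf
  set t := Fin.tail f
  have hcount_f (y : α) : #{i | f i = y} = (if f 0 = y then 1 else 0) + #{i | t i = y} :=
    Fin.card_filter_univ_succ' _
  obtain ⟨j, hj⟩ : ∃ j, t j = f 0 := by
    have hpos : 0 < #{i | t i = f 0} := Nat.pos_of_ne_zero fun h => by
      have := hfEven (f 0) (hfV 0)
      rw [hcount_f, if_pos rfl, h] at this
      exact Nat.not_even_one this
    obtain ⟨j, hj⟩ := card_pos.mp hpos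
    exact ⟨j, (mem_filter.mp hj).2⟩
  set r := Fin.removeNth j t
  have hcount_t (y : α) : #{i | t i = y} = (if t j = y then 1 else 0) + #{i | r i = y} :=
    Fin.card_filter_univ_succAbove _ j
  have hcount_r (y : α) : #{i | f i = y} = 2 * (if f 0 = y then 1 else 0) + #{i | r i = y} := by
    rw [hcount_f, hcount_t, hj]
    ring
  refine mem_image.mpr ⟨((f 0, j), r), ?_, ?_⟩
  · simp only [evenFiberTuples, mem_product, mem_univ, and_true, mem_filter,
      Fintype.mem_piFinset]
    refine ⟨hfV 0, fun i => hfV _, fun y hy => ?_⟩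
    have := hfEven y hy
    rw [hcount_r] at this
    exact (Nat.even_add.mp this).mp (even_two_mul _)
  · change Fin.cons (f 0) (Fin.insertNth j (f 0) r) = f
    rw [← hj, Fin.insertNth_self_removeNth, hj]
    exact Fin.cons_self_tail f

theorem card_evenFiberTuples_add_two_le (V : Finset α) (n : ℕ) :
    #(evenFiberTuples V (n + 2)) ≤ #V * (n + 1) * #(evenFiberTuples V n) :=
  calc #(evenFiberTuples V (n + 2))
      ≤ #(((V ×ˢ univ) ×ˢ evenFiberTuples V n).image
          fun q => (Fin.cons q.1.1 (Fin.insertNth q.1.2 q.1.1 q.2) : Fin (n + 2) → α)) :=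
        card_le_card (evenFiberTuples_add_two_subset V n)
    _ ≤ #((V ×ˢ univ) ×ˢ evenFiberTuples V n) := card_image_le
    _ = #V * (n + 1) * #(evenFiberTuples V n) := by simp [card_product]

theorem card_evenFiberTuples_two_mul_le (V : Finset α) (ν : ℕ) :
    #(evenFiberTuples V (2 * ν)) ≤ (2 * ν).choose ν * ν ! * #V ^ ν := by
  induction ν with
  | zero => simpa using card_le_one_of_subsingleton _
  | succ ν ih =>
    set B := ((2 * ν).choose ν * ν !)
    calc #(evenFiberTuples V (2 * (ν + 1)))
        ≤ #V * (2 * ν + 1) * #(evenFiberTuples V (2 * ν)) :=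
          card_evenFiberTuples_add_two_le V (2 * ν)
      _ ≤ #V * (2 * ν + 1) * (B * #V ^ ν) := by gcongr
      _ = (2 * ν + 1) * B * #V ^ (ν + 1) := by ring
      _ ≤ 2 * ((2 * ν + 1) * B * #V ^ (ν + 1)) := Nat.le_mul_of_pos_left _ two_pos
      _ = (2 * (ν + 1)).choose (ν + 1) * (ν + 1)! * #V ^ (ν + 1) := by
          rw [choose_two_mul_mul_factorial_succ]
          ring

end EvenFiberTuples

theorem stmt_4_general (α : Type) [DecidableEq α] (V : Finset α) (ν : ℕ) :
    (((Fintype.piFinset fun _ : Fin (2 * ν) => V)).filter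
        (fun f => ∀ x ∈ V, Even ((Finset.univ.filter fun i => f i = x).card))).card
      ≤ Nat.choose (2 * ν) ν * ν.factorial * V.card ^ ν :=
  card_evenFiberTuples_two_mul_le V ν

theorem stmt_4 (α : Type) [DecidableEq α] (V : Finset α) (ν : ℕ) (hν : 1 ≤ ν) :
    (((Fintype.piFinset fun _ : Fin (2 * ν) => V)).filter
        (fun f => ∀ x ∈ V, Even ((Finset.univ.filter fun i => f i = x).card))).card
      ≤ Nat.choose (2 * ν) ν * ν.factorial * V.card ^ ν :=
  stmt_4_general α V ν
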